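/- arXiv:2412.12720 — 4 statements merged into one kernel-verified Lean document; each statement's English description precedes it below -/
import Mathlib

section
/- Let T be a symmetric fourth-order tensor on ℝ^n. Then the injective norm of T is attained on the diagonal: sup{ |Σ_{i,j,k,l} T_{ijkl} x_i y_j z_k w_l| : x,y,z,w ∈ ℝ^n unit vectors } = sup{ |T(x,x,x,x)| : x ∈ ℝ^n a unit vector }, where T(x,x,x,x) = Σ_{i,j,k,l} T_{ijkl} x_i x_j x_k x_l. -/
/-!
Banach's theorem for symmetric forms, in degree four. For a symmetric bilinear form, polarization
`4 B(x, y) = B(x + y, x + y) - B(x - y, x - y)` and the parallelogram law show that the supremum of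
`|B(x, y)|` over unit vectors is attained on the diagonal. Applied to the first and to the last two
slots, this reduces the injective norm `M` of `T` to the supremum of `|T(u, u, t, t)|`. Polarizing
once more with `p = u + t`, `m = u - t` expresses `16 T(u, u, t, t)` through two diagonal values and
two values of the form `T(a, a, b, b)`; as `‖p‖² + ‖m‖² = 4`, this gives `M ≤ (M + D) / 2` where `D`
is the diagonal supremum, hence `M ≤ D`.
-/

noncomputable section

open scoped BigOperators

/-- A fourth-order tensor is symmetric if it is invariant under all permutations of its
four indices (equivalently, under the adjacent transpositions, which generate `S₄`). -/
def SymmTensor {n : ℕ} (T : Fin n → Fin n → Fin n → Fin n → ℝ) : Prop :=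
  ∀ i j k l, T i j k l = T j i k l ∧ T i j k l = T i k j l ∧ T i j k l = T i j l k

open Finset

section Homogeneous

variable {F : Type*} [NormedAddCommGroup F] [NormedSpace ℝ F]

theorem abs_le_mul_norm_pow_of_homogeneous {f : F → ℝ} {k : ℕ} (hk : k ≠ 0)
    (hf : ∀ (c : ℝ) x, f (c • x) = c ^ k * f x) {C : ℝ} (hC : ∀ x, ‖x‖ = 1 → |f x| ≤ C)
    (x : F) : |f x| ≤ C * ‖x‖ ^ k := by
  rcases eq_or_ne x 0 with rfl | hx
  · have hf0 : f 0 = 0 := by simpa [zero_pow hk] using hf 0 0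
    simp [hf0, zero_pow hk]
  · have hx' : ‖x‖ ≠ 0 := norm_ne_zero_iff.mpr hx
    have hunit : ‖‖x‖⁻¹ • x‖ = 1 := by rw [norm_smul, norm_inv, norm_norm, inv_mul_cancel₀ hx']
    have h := hC _ hunit
    rw [hf, abs_mul, abs_pow, abs_inv, abs_norm] at h
    calc |f x| = ‖x‖ ^ k * ((‖x‖⁻¹) ^ k * |f x|) := by
          rw [inv_pow, ← mul_assoc, mul_inv_cancel₀ (pow_ne_zero _ hx'), one_mul]
      _ ≤ ‖x‖ ^ k * C := by gcongr
      _ = C * ‖x‖ ^ k := mul_comm _ _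

end Homogeneous

section InnerProductSpace

variable {E : Type*} [NormedAddCommGroup E] [InnerProductSpace ℝ E]

theorem LinearMap.BilinForm.IsSymm.apply_add_add_sub_apply_sub_sub {B : LinearMap.BilinForm ℝ E}
    (hB : B.IsSymm) (x y : E) : B (x + y) (x + y) - B (x - y) (x - y) = 4 * B x y := by
  have hyx : B y x = B x y := (hB.eq x y).symm
  simp only [map_add, map_sub, LinearMap.add_apply, LinearMap.sub_apply, hyx]
  ring

theorem LinearMap.BilinForm.IsSymm.abs_apply_le_of_abs_apply_self_le {B : LinearMap.BilinForm ℝ E}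
    (hB : B.IsSymm) {D : ℝ} (hD : ∀ x, ‖x‖ = 1 → |B x x| ≤ D) {x y : E} (hx : ‖x‖ = 1)
    (hy : ‖y‖ = 1) : |B x y| ≤ D := by
  have hD' : ∀ v, |B v v| ≤ D * ‖v‖ ^ 2 := abs_le_mul_norm_pow_of_homogeneous two_ne_zero
    (fun c v => by simp only [map_smul, LinearMap.smul_apply, smul_eq_mul]; ring) hD
  have hpar := parallelogram_law_with_norm ℝ x y
  rw [hx, hy] at hpar
  have h4 : 4 * |B x y| ≤ 4 * D :=
    calc 4 * |B x y| = |B (x + y) (x + y) - B (x - y) (x - y)| := by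
          rw [hB.apply_add_add_sub_apply_sub_sub, abs_mul]; norm_num
      _ ≤ |B (x + y) (x + y)| + |B (x - y) (x - y)| := abs_sub _ _
      _ ≤ D * ‖x + y‖ ^ 2 + D * ‖x - y‖ ^ 2 := add_le_add (hD' _) (hD' _)
      _ = 4 * D := by rw [← mul_add, hpar]; ring
  linarith

variable (T : E →ₗ[ℝ] E →ₗ[ℝ] E →ₗ[ℝ] E →ₗ[ℝ] ℝ)

theorem abs_apply_le_of_abs_apply_pair_le (h12 : ∀ x y z w, T x y z w = T y x z w)
    (h34 : ∀ x y z w, T x y z w = T x y w z) {K : ℝ}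
    (hK : ∀ u t, ‖u‖ = 1 → ‖t‖ = 1 → |T u u t t| ≤ K) {x y z w : E} (hx : ‖x‖ = 1)
    (hy : ‖y‖ = 1) (hz : ‖z‖ = 1) (hw : ‖w‖ = 1) : |T x y z w| ≤ K := by
  have hxxzw : ∀ u, ‖u‖ = 1 → |T u u z w| ≤ K := fun u hu =>
    LinearMap.BilinForm.IsSymm.abs_apply_le_of_abs_apply_self_le (B := T u u)
      ⟨fun a b => h34 u u a b⟩ (fun t ht => hK u t hu ht) hz hw
  simpa using LinearMap.BilinForm.IsSymm.abs_apply_le_of_abs_apply_self_le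
    (B := T.compr₂ ((LinearMap.applyₗ w) ∘ₗ LinearMap.applyₗ z))
    ⟨fun a b => by simpa using h12 a b z w⟩ (fun u hu => by simpa using hxxzw u hu) hx hy

theorem apply_add_sub_polarization (h12 : ∀ x y z w, T x y z w = T y x z w)
    (h23 : ∀ x y z w, T x y z w = T x z y w) (h34 : ∀ x y z w, T x y z w = T x y w z) (u t : E) :
    T (u + t) (u + t) (u + t) (u + t) - T (u + t) (u + t) (u - t) (u - t)
      - T (u - t) (u - t) (u + t) (u + t) + T (u - t) (u - t) (u - t) (u - t) = 16 * T u u t t := by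
  have h₁ : ∀ c d, T (u + t) (u + t) c d - T (u - t) (u - t) c d = 4 * T u t c d := fun c d => by
    simpa only [LinearMap.compr₂_apply, LinearMap.comp_apply, LinearMap.applyₗ_apply_apply] using
      (LinearMap.BilinForm.IsSymm.apply_add_add_sub_apply_sub_sub
        (B := T.compr₂ ((LinearMap.applyₗ d) ∘ₗ LinearMap.applyₗ c))
        ⟨fun a b => by simpa using h12 a b c d⟩ u t)
  have h₂ : T u t (u + t) (u + t) - T u t (u - t) (u - t) = 4 * T u t u t :=
    LinearMap.BilinForm.IsSymm.apply_add_add_sub_apply_sub_sub ⟨fun a b => h34 u t a b⟩ u t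
  rw [h23 u u t t]
  linear_combination h₁ (u + t) (u + t) - h₁ (u - t) (u - t) + 4 * h₂

theorem abs_apply_pair_le_mul_norm_sq {M : ℝ}
    (hM : ∀ x y z w, ‖x‖ = 1 → ‖y‖ = 1 → ‖z‖ = 1 → ‖w‖ = 1 → |T x y z w| ≤ M) (a b : E) :
    |T a a b b| ≤ M * ‖a‖ ^ 2 * ‖b‖ ^ 2 := by
  have hunit : ∀ a b, ‖b‖ = 1 → |T a a b b| ≤ M * ‖a‖ ^ 2 := fun a b hb =>
    abs_le_mul_norm_pow_of_homogeneous two_ne_zero (f := fun a => T a a b b)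
      (fun c a => by simp only [map_smul, LinearMap.smul_apply, smul_eq_mul]; ring)
      (fun a ha => hM a a b b ha ha hb hb) a
  exact abs_le_mul_norm_pow_of_homogeneous two_ne_zero (f := fun b => T a a b b)
    (fun c b => by simp only [map_smul, LinearMap.smul_apply, smul_eq_mul]; ring) (hunit a) b

theorem abs_apply_pair_le_half_add (h12 : ∀ x y z w, T x y z w = T y x z w)
    (h23 : ∀ x y z w, T x y z w = T x z y w) (h34 : ∀ x y z w, T x y z w = T x y w z) {M D : ℝ}
    (hM : ∀ x y z w, ‖x‖ = 1 → ‖y‖ = 1 → ‖z‖ = 1 → ‖w‖ = 1 → |T x y z w| ≤ M)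
    (hD : ∀ x, ‖x‖ = 1 → |T x x x x| ≤ D) {u t : E} (hu : ‖u‖ = 1) (ht : ‖t‖ = 1) :
    |T u u t t| ≤ (M + D) / 2 := by
  have hD' : ∀ a, |T a a a a| ≤ D * ‖a‖ ^ 4 := abs_le_mul_norm_pow_of_homogeneous four_ne_zero
    (fun c a => by simp only [map_smul, LinearMap.smul_apply, smul_eq_mul]; ring) hD
  have hM' := abs_apply_pair_le_mul_norm_sq T hM
  have hpolar := apply_add_sub_polarization T h12 h23 h34 u t
  set p := u + t
  set m := u - t
  have hpar : ‖p‖ ^ 2 + ‖m‖ ^ 2 = 4 := by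
    rw [parallelogram_law_with_norm ℝ u t, hu, ht]; norm_num
  have h16 : 16 * |T u u t t| ≤
      D * (‖p‖ ^ 2) ^ 2 + 2 * M * ‖p‖ ^ 2 * ‖m‖ ^ 2 + D * (‖m‖ ^ 2) ^ 2 := by
    calc 16 * |T u u t t| = |T p p p p - T p p m m - T m m p p + T m m m m| := by
          rw [hpolar, abs_mul]; norm_num
      _ ≤ |T p p p p| + |T p p m m| + |T m m p p| + |T m m m m| := by
          linarith [abs_add_le (T p p p p - T p p m m - T m m p p) (T m m m m),
            abs_sub (T p p p p - T p p m m) (T m m p p), abs_sub (T p p p p) (T p p m m)]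
      _ ≤ D * ‖p‖ ^ 4 + M * ‖p‖ ^ 2 * ‖m‖ ^ 2 + M * ‖m‖ ^ 2 * ‖p‖ ^ 2 + D * ‖m‖ ^ 4 := by
          gcongr <;> apply_assumption
      _ = _ := by ring
  -- With `‖m‖² = 4 - ‖p‖²`, `8 (M + D)` exceeds the bound in `h16` by `2 (M - D) (‖p‖² - 2)²`,
  -- which is nonnegative when `D ≤ M`; when `M ≤ D`, `M` itself is the better bound.
  rw [show ‖m‖ ^ 2 = 4 - ‖p‖ ^ 2 by linarith] at h16
  rcases le_total M D with hMD | hDM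
  · linarith [hM u u t t hu hu ht ht]
  · nlinarith [mul_nonneg (sub_nonneg.2 hDM) (sq_nonneg (‖p‖ ^ 2 - 2))]

theorem sSup_abs_apply_eq_sSup_abs_apply_self (h12 : ∀ x y z w, T x y z w = T y x z w)
    (h23 : ∀ x y z w, T x y z w = T x z y w) (h34 : ∀ x y z w, T x y z w = T x y w z)
    (hbdd : BddAbove {r | ∃ x y z w : E, ‖x‖ = 1 ∧ ‖y‖ = 1 ∧ ‖z‖ = 1 ∧ ‖w‖ = 1 ∧
      r = |T x y z w|}) :
    sSup {r | ∃ x y z w : E, ‖x‖ = 1 ∧ ‖y‖ = 1 ∧ ‖z‖ = 1 ∧ ‖w‖ = 1 ∧ r = |T x y z w|} =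
      sSup {r | ∃ x : E, ‖x‖ = 1 ∧ r = |T x x x x|} := by
  set S := {r | ∃ x y z w : E, ‖x‖ = 1 ∧ ‖y‖ = 1 ∧ ‖z‖ = 1 ∧ ‖w‖ = 1 ∧ r = |T x y z w|}
  set S₀ := {r | ∃ x : E, ‖x‖ = 1 ∧ r = |T x x x x|}
  have hsub : S₀ ⊆ S := by
    rintro _ ⟨x, hx, rfl⟩
    exact ⟨x, x, x, x, hx, hx, hx, hx, rfl⟩
  have hS : 0 ≤ sSup S := Real.sSup_nonneg (by
    rintro _ ⟨x, y, z, w, -, -, -, -, rfl⟩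
    exact abs_nonneg _)
  have hS₀ : 0 ≤ sSup S₀ := Real.sSup_nonneg (by
    rintro _ ⟨x, -, rfl⟩
    exact abs_nonneg _)
  have hM : ∀ x y z w, ‖x‖ = 1 → ‖y‖ = 1 → ‖z‖ = 1 → ‖w‖ = 1 → |T x y z w| ≤ sSup S :=
    fun x y z w hx hy hz hw => le_csSup hbdd ⟨x, y, z, w, hx, hy, hz, hw, rfl⟩
  have hD : ∀ x, ‖x‖ = 1 → |T x x x x| ≤ sSup S₀ :=
    fun x hx => le_csSup (hbdd.mono hsub) ⟨x, hx, rfl⟩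
  have hhalf : sSup S ≤ (sSup S + sSup S₀) / 2 := by
    refine Real.sSup_le ?_ (by positivity)
    rintro _ ⟨x, y, z, w, hx, hy, hz, hw, rfl⟩
    exact abs_apply_le_of_abs_apply_pair_le T h12 h34
      (fun u t hu ht => abs_apply_pair_le_half_add T h12 h23 h34 hM hD hu ht) hx hy hz hw
  exact le_antisymm (by linarith) (Real.sSup_le (fun r hr => le_csSup hbdd (hsub hr)) hS)

end InnerProductSpace

theorem EuclideanSpace.norm_eq_one_iff_sum_sq {ι : Type*} [Fintype ι] (x : EuclideanSpace ℝ ι) :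
    ‖x‖ = 1 ↔ ∑ i, x i ^ 2 = 1 := by
  rw [← EuclideanSpace.real_norm_sq_eq, pow_eq_one_iff_of_nonneg (norm_nonneg x) two_ne_zero]

section Tensor

variable {n : ℕ} (T : Fin n → Fin n → Fin n → Fin n → ℝ)

def tensorForm :
    EuclideanSpace ℝ (Fin n) →ₗ[ℝ] EuclideanSpace ℝ (Fin n) →ₗ[ℝ] EuclideanSpace ℝ (Fin n) →ₗ[ℝ]
      EuclideanSpace ℝ (Fin n) →ₗ[ℝ] ℝ :=
  let π (i : Fin n) : EuclideanSpace ℝ (Fin n) →ₗ[ℝ] ℝ :=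
    (EuclideanSpace.proj (𝕜 := ℝ) i).toLinearMap
  ∑ i, ∑ j, ∑ k, ∑ l, T i j k l • (π i).smulRight ((π j).smulRight ((π k).smulRight (π l)))

theorem tensorForm_apply (x y z w : EuclideanSpace ℝ (Fin n)) :
    tensorForm T x y z w = ∑ i, ∑ j, ∑ k, ∑ l, T i j k l * x i * y j * z k * w l := by
  simp [tensorForm, mul_assoc]

theorem bddAbove_abs_tensorForm :
    BddAbove {r | ∃ x y z w : EuclideanSpace ℝ (Fin n), ‖x‖ = 1 ∧ ‖y‖ = 1 ∧ ‖z‖ = 1 ∧ ‖w‖ = 1 ∧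
      r = |tensorForm T x y z w|} := by
  refine ⟨∑ i, ∑ j, ∑ k, ∑ l, |T i j k l|, ?_⟩
  rintro _ ⟨x, y, z, w, hx, hy, hz, hw, rfl⟩
  have hcoord : ∀ (v : EuclideanSpace ℝ (Fin n)) i, ‖v‖ = 1 → |v i| ≤ 1 := fun v i hv =>
    hv ▸ PiLp.norm_apply_le v i
  rw [tensorForm_apply]
  refine (abs_sum_le_sum_abs _ _).trans (sum_le_sum fun i _ => (abs_sum_le_sum_abs _ _).trans
    (sum_le_sum fun j _ => (abs_sum_le_sum_abs _ _).trans
    (sum_le_sum fun k _ => (abs_sum_le_sum_abs _ _).trans (sum_le_sum fun l _ => ?_))))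
  simp only [abs_mul]
  calc |T i j k l| * |x i| * |y j| * |z k| * |w l| ≤ |T i j k l| * 1 * 1 * 1 * 1 := by
        gcongr <;> apply hcoord <;> assumption
    _ = |T i j k l| := by ring

theorem setOf_abs_sum_eq_setOf_abs_tensorForm :
    {r : ℝ | ∃ x y z w : Fin n → ℝ,
        (∑ i, x i ^ 2) = 1 ∧ (∑ i, y i ^ 2) = 1 ∧ (∑ i, z i ^ 2) = 1 ∧ (∑ i, w i ^ 2) = 1 ∧
        r = |∑ i, ∑ j, ∑ k, ∑ l, T i j k l * x i * y j * z k * w l| } =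
      {r | ∃ x y z w : EuclideanSpace ℝ (Fin n), ‖x‖ = 1 ∧ ‖y‖ = 1 ∧ ‖z‖ = 1 ∧ ‖w‖ = 1 ∧
        r = |tensorForm T x y z w|} := by
  simp only [EuclideanSpace.norm_eq_one_iff_sum_sq, tensorForm_apply]
  ext r
  constructor
  · rintro ⟨x, y, z, w, h⟩
    exact ⟨WithLp.toLp 2 x, WithLp.toLp 2 y, WithLp.toLp 2 z, WithLp.toLp 2 w, h⟩
  · rintro ⟨x, y, z, w, h⟩
    exact ⟨x.ofLp, y.ofLp, z.ofLp, w.ofLp, h⟩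

theorem setOf_abs_sum_diag_eq_setOf_abs_tensorForm_diag :
    {r : ℝ | ∃ x : Fin n → ℝ, (∑ i, x i ^ 2) = 1 ∧
        r = |∑ i, ∑ j, ∑ k, ∑ l, T i j k l * x i * x j * x k * x l| } =
      {r | ∃ x : EuclideanSpace ℝ (Fin n), ‖x‖ = 1 ∧ r = |tensorForm T x x x x|} := by
  simp only [EuclideanSpace.norm_eq_one_iff_sum_sq, tensorForm_apply]
  ext r
  constructor
  · rintro ⟨x, h⟩
    exact ⟨WithLp.toLp 2 x, h⟩
  · rintro ⟨x, h⟩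
    exact ⟨x.ofLp, h⟩

variable {T}

theorem SymmTensor.tensorForm_swap₁₂ (hT : SymmTensor T) (x y z w : EuclideanSpace ℝ (Fin n)) :
    tensorForm T x y z w = tensorForm T y x z w := by
  simp only [tensorForm_apply]
  rw [sum_comm]
  refine sum_congr rfl fun j _ => sum_congr rfl fun i _ => sum_congr rfl fun k _ =>
    sum_congr rfl fun l _ => ?_
  rw [(hT i j k l).1]; ring

theorem SymmTensor.tensorForm_swap₂₃ (hT : SymmTensor T) (x y z w : EuclideanSpace ℝ (Fin n)) :
    tensorForm T x y z w = tensorForm T x z y w := by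
  simp only [tensorForm_apply]
  refine sum_congr rfl fun i _ => ?_
  rw [sum_comm]
  refine sum_congr rfl fun k _ => sum_congr rfl fun j _ => sum_congr rfl fun l _ => ?_
  rw [(hT i j k l).2.1]; ring

theorem SymmTensor.tensorForm_swap₃₄ (hT : SymmTensor T) (x y z w : EuclideanSpace ℝ (Fin n)) :
    tensorForm T x y z w = tensorForm T x y w z := by
  simp only [tensorForm_apply]
  refine sum_congr rfl fun i _ => sum_congr rfl fun j _ => ?_
  rw [sum_comm]
  refine sum_congr rfl fun l _ => sum_congr rfl fun k _ => ?_
  rw [(hT i j k l).2.2]; ring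

end Tensor

/-- The injective norm is attained on the diagonal for symmetric fourth-order tensors. -/
theorem injNorm_eq_sup_diagonal (n : ℕ) (T : Fin n → Fin n → Fin n → Fin n → ℝ)
    (hsymm : SymmTensor T) :
    sSup { r : ℝ | ∃ x y z w : Fin n → ℝ,
        (∑ i, x i ^ 2) = 1 ∧ (∑ i, y i ^ 2) = 1 ∧ (∑ i, z i ^ 2) = 1 ∧ (∑ i, w i ^ 2) = 1 ∧
        r = |∑ i, ∑ j, ∑ k, ∑ l, T i j k l * x i * y j * z k * w l| } =
    sSup { r : ℝ | ∃ x : Fin n → ℝ, (∑ i, x i ^ 2) = 1 ∧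
        r = |∑ i, ∑ j, ∑ k, ∑ l, T i j k l * x i * x j * x k * x l| } := by
  rw [setOf_abs_sum_eq_setOf_abs_tensorForm, setOf_abs_sum_diag_eq_setOf_abs_tensorForm_diag]
  exact sSup_abs_apply_eq_sSup_abs_apply_self (tensorForm T) hsymm.tensorForm_swap₁₂
    hsymm.tensorForm_swap₂₃ hsymm.tensorForm_swap₃₄ (bddAbove_abs_tensorForm T)
end
end

section
/- Let m ≥ 1 and δ > 0, and let ℋ denote the set of linear subspaces of ℝ^m. There exists a function C : ℋ × ℝ^m × ℝ^m → Mat(ℝ^m, ℝ^m) such that for every subspace H ∈ ℋ and all v, u ∈ ℝ^m: (1) C(H,v,u) is symmetric positive semidefinite, its image is contained in H, it is positive definite when restricted to H (i.e., ⟨w, C(H,v,u) w⟩ > 0 for every nonzero w ∈ H), and C(H,v,u) ⪯ P_H where P_H is the orthogonal projection onto H; (2) for each fixed H, the map (v,u) ↦ C(H,v,u) is locally Lipschitz; (3) Tr(C(H,v,u)) ≥ dim(H) − 2; (4) ‖C(H,v,u) v‖ ≤ δ and ‖C(H,v,u) u‖ ≤ δ. -/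
noncomputable section

open scoped RealInnerProductSpace

/-- The orthogonal projection onto a subspace `H`, as a continuous linear map on the
ambient space. -/
def projCLM {m : ℕ} (H : Submodule ℝ (EuclideanSpace ℝ (Fin m))) :
    EuclideanSpace ℝ (Fin m) →L[ℝ] EuclideanSpace ℝ (Fin m) :=
  H.subtypeL.comp (H.orthogonalProjectionOnto)

/-!
With `P = P_H`, `a = P v`, `b = P u` and `l = δ⁻²`, take `C = P B P` where
`B = (1 + l (a aᵀ + b bᵀ))⁻¹`. Since `T = 1 + l (a aᵀ + b bᵀ) ≥ 1`, its inverse satisfies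
`‖B x‖² ≤ ⟪B x, x⟫ ≤ ‖x‖²`, which gives positivity, definiteness on `H` and `C ≤ P`. The
stronger bound `T ≥ 1 + l a aᵀ` gives `l ⟪B a, a⟫ ≤ 1`, hence `‖C v‖² ≤ ‖B a‖² ≤ δ²`, and
likewise for `u`. From `B T = 1` one gets `B = 1 - l (B a aᵀ + B b bᵀ)`, so
`tr C = dim H - l (⟪a, B a⟫ + ⟪b, B b⟫) ≥ dim H - 2`. Finally `C` is a smooth function of
`(v, u)` because operator inversion is smooth on invertible operators.
-/

open scoped Ring
open ContinuousLinearMap InnerProductSpace Module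

variable {E : Type*} [NormedAddCommGroup E] [InnerProductSpace ℝ E]

namespace ContinuousLinearMap

section BoundedBelowByOne

variable [FiniteDimensional ℝ E] {T : E →L[ℝ] E} (hT : ∀ x, ‖x‖ ^ 2 ≤ ⟪T x, x⟫)
include hT

theorem isUnit_of_norm_sq_le_inner : IsUnit T := by
  have hinj : Function.Injective T := by
    refine (injective_iff_map_eq_zero T).2 fun x hx => ?_
    have := hT x
    rw [hx, inner_zero_left] at this
    exact norm_eq_zero.1 (pow_eq_zero_iff two_ne_zero |>.1 (le_antisymm this (by positivity)))
  exact isUnit_iff_bijective.2 ⟨hinj, LinearMap.injective_iff_surjective.1 hinj⟩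

theorem apply_ringInverse_apply (x : E) : T (T⁻¹ʳ x) = x := by
  change (T * T⁻¹ʳ) x = x
  rw [Ring.mul_inverse_cancel T (isUnit_of_norm_sq_le_inner hT)]
  rfl

theorem norm_sq_ringInverse_apply_le_inner (x : E) : ‖T⁻¹ʳ x‖ ^ 2 ≤ ⟪T⁻¹ʳ x, x⟫ := by
  simpa only [apply_ringInverse_apply hT, real_inner_comm x] using hT (T⁻¹ʳ x)

theorem inner_ringInverse_apply_le_norm_sq (x : E) : ⟪T⁻¹ʳ x, x⟫ ≤ ‖x‖ ^ 2 := by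
  have hcs := real_inner_le_norm (T⁻¹ʳ x) x
  have hle : ‖T⁻¹ʳ x‖ ≤ ‖x‖ := by
    nlinarith [norm_sq_ringInverse_apply_le_inner hT x, norm_nonneg (T⁻¹ʳ x), norm_nonneg x]
  nlinarith [norm_nonneg x]

theorem inner_ringInverse_apply_pos {x : E} (hx : x ≠ 0) : 0 < ⟪T⁻¹ʳ x, x⟫ := by
  have hne : T⁻¹ʳ x ≠ 0 := fun h => hx <| by rw [← apply_ringInverse_apply hT x, h, map_zero]
  exact (pow_pos (norm_pos_iff.2 hne) 2).trans_le (norm_sq_ringInverse_apply_le_inner hT x)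

end BoundedBelowByOne

theorem mul_inner_ringInverse_apply_le_one [FiniteDimensional ℝ E] {T : E →L[ℝ] E} {l : ℝ}
    (hl : 0 ≤ l) {a : E} (hT : ∀ x, ‖x‖ ^ 2 + l * ⟪a, x⟫ ^ 2 ≤ ⟪T x, x⟫) :
    l * ⟪T⁻¹ʳ a, a⟫ ≤ 1 := by
  have hT₁ (x : E) : ‖x‖ ^ 2 ≤ ⟪T x, x⟫ := by nlinarith [hT x, sq_nonneg ⟪a, x⟫]
  set s := ⟪T⁻¹ʳ a, a⟫
  -- `s = ⟪T y, y⟫ ≥ l s²` for `y = T⁻¹ a`, since `⟪a, y⟫ = s`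
  have hs : l * s ^ 2 ≤ s := by
    have := hT (T⁻¹ʳ a)
    rw [apply_ringInverse_apply hT₁, real_inner_comm (T⁻¹ʳ a)] at this
    nlinarith [sq_nonneg ‖T⁻¹ʳ a‖]
  nlinarith [mul_nonneg hl (sq_nonneg (l * s - 1))]

theorem norm_sq_ringInverse_apply_le_inv [FiniteDimensional ℝ E] {T : E →L[ℝ] E} {l : ℝ}
    (hl : 0 < l) {a : E} (hT : ∀ x, ‖x‖ ^ 2 + l * ⟪a, x⟫ ^ 2 ≤ ⟪T x, x⟫) :
    ‖T⁻¹ʳ a‖ ^ 2 ≤ l⁻¹ := by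
  have hT₁ (x : E) : ‖x‖ ^ 2 ≤ ⟪T x, x⟫ := by nlinarith [hT x, sq_nonneg ⟪a, x⟫]
  rw [← one_div, le_div_iff₀' hl]
  nlinarith [norm_sq_ringInverse_apply_le_inner hT₁ a, mul_inner_ringInverse_apply_le_one hl.le hT]

end ContinuousLinearMap

section ShiftedGram

variable (l : ℝ) (a b : E)

def shiftedGram : E →L[ℝ] E := 1 + l • (rankOne ℝ a a + rankOne ℝ b b)

theorem inner_shiftedGram_apply_self (x : E) :
    ⟪shiftedGram l a b x, x⟫ = ‖x‖ ^ 2 + l * ⟪a, x⟫ ^ 2 + l * ⟪b, x⟫ ^ 2 := by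
  simp only [shiftedGram, add_apply, one_apply_eq_self, smul_apply, rankOne_apply, inner_add_left,
    inner_smul_left, real_inner_self_eq_norm_sq, conj_trivial]
  ring

variable {l}

theorem contDiff_shiftedGram {n : WithTop ℕ∞} :
    ContDiff ℝ n (fun p : E × E => shiftedGram l p.1 p.2) := by
  have hrk : ContDiff ℝ n (fun x : E => rankOne ℝ x x) :=
    (isBoundedBilinearMap_smulRight (𝕜 := ℝ) (E := E) (F := E)).contDiff.comp
      ((innerSL ℝ).contDiff.prodMk contDiff_id)
  exact contDiff_const.add (((hrk.comp contDiff_fst).add (hrk.comp contDiff_snd)).const_smul l)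

theorem isPositive_shiftedGram (hl : 0 ≤ l) : (shiftedGram l a b).IsPositive :=
  isPositive_one.add
    (((isPositive_rankOne_self a).add (isPositive_rankOne_self b)).smul_of_nonneg hl)

theorem norm_sq_add_le_inner_shiftedGram_left (hl : 0 ≤ l) (x : E) :
    ‖x‖ ^ 2 + l * ⟪a, x⟫ ^ 2 ≤ ⟪shiftedGram l a b x, x⟫ := by
  rw [inner_shiftedGram_apply_self]
  nlinarith [mul_nonneg hl (sq_nonneg ⟪b, x⟫)]

theorem norm_sq_add_le_inner_shiftedGram_right (hl : 0 ≤ l) (x : E) :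
    ‖x‖ ^ 2 + l * ⟪b, x⟫ ^ 2 ≤ ⟪shiftedGram l a b x, x⟫ := by
  rw [inner_shiftedGram_apply_self]
  nlinarith [mul_nonneg hl (sq_nonneg ⟪a, x⟫)]

theorem norm_sq_le_inner_shiftedGram (hl : 0 ≤ l) (x : E) :
    ‖x‖ ^ 2 ≤ ⟪shiftedGram l a b x, x⟫ :=
  le_trans (by nlinarith [mul_nonneg hl (sq_nonneg ⟪a, x⟫)])
    (norm_sq_add_le_inner_shiftedGram_left a b hl x)

theorem ringInverse_shiftedGram [FiniteDimensional ℝ E] (hl : 0 ≤ l) :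
    (shiftedGram l a b)⁻¹ʳ = 1 - l • (rankOne ℝ ((shiftedGram l a b)⁻¹ʳ a) a
      + rankOne ℝ ((shiftedGram l a b)⁻¹ʳ b) b) := by
  have h : (shiftedGram l a b)⁻¹ʳ * (1 + l • (rankOne ℝ a a + rankOne ℝ b b)) = 1 :=
    Ring.inverse_mul_cancel _ (isUnit_of_norm_sq_le_inner (norm_sq_le_inner_shiftedGram a b hl))
  rw [mul_add, mul_one, mul_smul_comm, mul_add, mul_def, mul_def, comp_rankOne,
    comp_rankOne] at h
  exact eq_sub_of_add_eq h

end ShiftedGram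

section SmoothedProjection

variable [FiniteDimensional ℝ E] (H : Submodule ℝ E)

def smoothedProjection (l : ℝ) (v u : E) : E →L[ℝ] E :=
  H.starProjection ∘L (shiftedGram l (H.starProjection v) (H.starProjection u))⁻¹ʳ ∘L
    H.starProjection

variable {H} {l : ℝ} (v u : E)

theorem isSelfAdjoint_smoothedProjection (hl : 0 ≤ l) :
    IsSelfAdjoint (smoothedProjection H l v u) :=
  (isPositive_shiftedGram _ _ hl).isSelfAdjoint.ringInverse.conj_starProjection H

theorem smoothedProjection_apply_mem (w : E) : smoothedProjection H l v u w ∈ H :=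
  H.starProjection_apply_mem _

theorem inner_smoothedProjection_apply_self_nonneg (hl : 0 ≤ l) (w : E) :
    0 ≤ ⟪smoothedProjection H l v u w, w⟫ := by
  rw [smoothedProjection, comp_apply, comp_apply, H.inner_starProjection_left_eq_right]
  exact (pow_two_nonneg _).trans
    (norm_sq_ringInverse_apply_le_inner (norm_sq_le_inner_shiftedGram _ _ hl) _)

theorem inner_smoothedProjection_apply_self_pos (hl : 0 ≤ l) {w : E} (hw : w ∈ H) (hw₀ : w ≠ 0) :
    0 < ⟪smoothedProjection H l v u w, w⟫ := by
  rw [smoothedProjection, comp_apply, comp_apply, H.inner_starProjection_left_eq_right,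
    H.starProjection_eq_self_iff.2 hw]
  exact inner_ringInverse_apply_pos (norm_sq_le_inner_shiftedGram _ _ hl) hw₀

theorem inner_smoothedProjection_apply_self_le (hl : 0 ≤ l) (w : E) :
    ⟪smoothedProjection H l v u w, w⟫ ≤ ⟪H.starProjection w, w⟫ := by
  rw [smoothedProjection, comp_apply, comp_apply, H.inner_starProjection_left_eq_right]
  calc _ ≤ ‖H.starProjection w‖ ^ 2 :=
        inner_ringInverse_apply_le_norm_sq (norm_sq_le_inner_shiftedGram _ _ hl) _
    _ = ⟪H.starProjection (H.starProjection w), w⟫ := by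
        rw [H.inner_starProjection_left_eq_right, real_inner_self_eq_norm_sq]
    _ = ⟪H.starProjection w, w⟫ := by
        rw [H.starProjection_eq_self_iff.2 (H.starProjection_apply_mem w)]

theorem finrank_sub_two_le_trace_smoothedProjection (hl : 0 ≤ l) :
    (finrank ℝ H : ℝ) - 2 ≤ LinearMap.trace ℝ E (smoothedProjection H l v u) := by
  set P := H.starProjection
  set a := P v
  set b := P u
  set B := (shiftedGram l a b)⁻¹ʳ
  have hP : LinearMap.IsProj H (P : E →ₗ[ℝ] E) :=
    ⟨H.starProjection_apply_mem, fun _ hx => H.starProjection_eq_self_iff.2 hx⟩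
  have hPB : P ∘L B = P - l • (rankOne ℝ (P (B a)) a + rankOne ℝ (P (B b)) b) := by
    have hB : B = 1 - l • (rankOne ℝ (B a) a + rankOne ℝ (B b) b) := ringInverse_shiftedGram a b hl
    conv_lhs => rw [hB]
    rw [comp_sub, comp_smul, comp_add, comp_rankOne, comp_rankOne, ← mul_def, mul_one]
  have htrace : LinearMap.trace ℝ E (smoothedProjection H l v u) =
      LinearMap.trace ℝ E (P ∘L B) := by
    change LinearMap.trace ℝ E ((P ∘L B : E →L[ℝ] E) ∘ₗ (P : E →ₗ[ℝ] E)) = _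
    have hPP : P ∘L P = P := H.isIdempotentElem_starProjection
    rw [LinearMap.trace_comp_comm', ← toLinearMap_comp, ← comp_assoc, hPP]
  have hinner (x : E) (hx : x ∈ H) : ⟪x, P (B x)⟫ = ⟪B x, x⟫ := by
    rw [← H.inner_starProjection_left_eq_right, H.starProjection_eq_self_iff.2 hx, real_inner_comm]
  have ha := mul_inner_ringInverse_apply_le_one hl (norm_sq_add_le_inner_shiftedGram_left a b hl)
  have hb := mul_inner_ringInverse_apply_le_one hl (norm_sq_add_le_inner_shiftedGram_right a b hl)
  rw [htrace, hPB, toLinearMap_sub, toLinearMap_smul, toLinearMap_add, map_sub, map_smul,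
    map_add, trace_rankOne, trace_rankOne, hP.trace, hinner a (H.starProjection_apply_mem v),
    hinner b (H.starProjection_apply_mem u), smul_eq_mul]
  linarith

theorem contDiff_smoothedProjection (hl : 0 ≤ l) :
    ContDiff ℝ 1 (fun p : E × E => smoothedProjection H l p.1 p.2) := by
  refine contDiff_iff_contDiffAt.2 fun p => ?_
  have hT := (contDiff_shiftedGram (l := l) (n := 1)).comp
    (H.starProjection.prodMap H.starProjection).contDiff
  have hu := isUnit_of_norm_sq_le_inner
    (norm_sq_le_inner_shiftedGram (H.starProjection p.1) (H.starProjection p.2) hl)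
  have hinv : ContDiffAt ℝ 1 Ring.inverse
      (shiftedGram l (H.starProjection p.1) (H.starProjection p.2)) :=
    hu.unit_spec ▸ contDiffAt_ringInverse ℝ hu.unit
  have hB : ContDiffAt ℝ 1
      (fun q : E × E => (shiftedGram l (H.starProjection q.1) (H.starProjection q.2))⁻¹ʳ) p :=
    ContDiffAt.comp (g := Ring.inverse) p hinv hT.contDiffAt
  exact contDiffAt_const.clm_comp (hB.clm_comp contDiffAt_const)

theorem norm_sq_smoothedProjection_apply_left_le (hl : 0 < l) :
    ‖smoothedProjection H l v u v‖ ^ 2 ≤ l⁻¹ :=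
  (pow_le_pow_left₀ (norm_nonneg _) (H.norm_starProjection_apply_le _) 2).trans
    (norm_sq_ringInverse_apply_le_inv hl (norm_sq_add_le_inner_shiftedGram_left _ _ hl.le))

theorem norm_sq_smoothedProjection_apply_right_le (hl : 0 < l) :
    ‖smoothedProjection H l v u u‖ ^ 2 ≤ l⁻¹ :=
  (pow_le_pow_left₀ (norm_nonneg _) (H.norm_starProjection_apply_le _) 2).trans
    (norm_sq_ringInverse_apply_le_inv hl (norm_sq_add_le_inner_shiftedGram_right _ _ hl.le))

end SmoothedProjection

theorem smoothed_projection_exists_general (m : ℕ) (δ : ℝ) (hδ : 0 < δ) :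
    ∃ C : Submodule ℝ (EuclideanSpace ℝ (Fin m)) → EuclideanSpace ℝ (Fin m) →
        EuclideanSpace ℝ (Fin m) →
        (EuclideanSpace ℝ (Fin m) →L[ℝ] EuclideanSpace ℝ (Fin m)),
      ∀ (H : Submodule ℝ (EuclideanSpace ℝ (Fin m))) (v u : EuclideanSpace ℝ (Fin m)),
        (∀ w w', ⟪C H v u w, w'⟫ = ⟪w, C H v u w'⟫) ∧
        (∀ w, 0 ≤ ⟪C H v u w, w⟫) ∧
        (∀ w, C H v u w ∈ H) ∧
        (∀ w ∈ H, w ≠ 0 → 0 < ⟪C H v u w, w⟫) ∧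
        (∀ w, ⟪C H v u w, w⟫ ≤ ⟪projCLM H w, w⟫) ∧
        LocallyLipschitz
          (fun p : EuclideanSpace ℝ (Fin m) × EuclideanSpace ℝ (Fin m) => C H p.1 p.2) ∧
        ((Module.finrank ℝ H : ℝ) - 2 ≤
          LinearMap.trace ℝ (EuclideanSpace ℝ (Fin m)) (C H v u : _ →ₗ[ℝ] _)) ∧
        ‖C H v u v‖ ≤ δ ∧ ‖C H v u u‖ ≤ δ := by
  have hl : 0 < (δ ^ 2)⁻¹ := by positivity
  have hnorm {x : EuclideanSpace ℝ (Fin m)} (hx : ‖x‖ ^ 2 ≤ (δ ^ 2)⁻¹⁻¹) : ‖x‖ ≤ δ :=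
    (pow_le_pow_iff_left₀ (norm_nonneg x) hδ.le two_ne_zero).1 (by rwa [inv_inv] at hx)
  refine ⟨fun H => smoothedProjection H (δ ^ 2)⁻¹, fun H v u => ?_⟩
  exact ⟨isSelfAdjoint_iff_isSymmetric.1 (isSelfAdjoint_smoothedProjection v u hl.le),
    inner_smoothedProjection_apply_self_nonneg v u hl.le,
    smoothedProjection_apply_mem v u,
    fun _ hw hw₀ => inner_smoothedProjection_apply_self_pos v u hl.le hw hw₀,
    inner_smoothedProjection_apply_self_le v u hl.le,
    (contDiff_smoothedProjection hl.le).locallyLipschitz,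
    finrank_sub_two_le_trace_smoothedProjection v u hl.le,
    hnorm (norm_sq_smoothedProjection_apply_left_le v u hl),
    hnorm (norm_sq_smoothedProjection_apply_right_le v u hl)⟩

/-- **Existence of the smoothed two-direction projection** (Lemma `Cprops` of the paper):
for every `δ > 0` there is a map `C : ℋ × ℝ^m × ℝ^m → Mat(ℝ^m, ℝ^m)` such that
`C(H,v,u)` is symmetric PSD with image inside `H`, positive definite on `H`, dominated by
the orthogonal projection `P_H`, locally Lipschitz in `(v,u)`, with trace at least
`dim H - 2`, and with `‖C(H,v,u)v‖, ‖C(H,v,u)u‖ ≤ δ`. -/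
theorem smoothed_projection_exists (m : ℕ) (hm : 1 ≤ m) (δ : ℝ) (hδ : 0 < δ) :
    ∃ C : Submodule ℝ (EuclideanSpace ℝ (Fin m)) → EuclideanSpace ℝ (Fin m) →
        EuclideanSpace ℝ (Fin m) →
        (EuclideanSpace ℝ (Fin m) →L[ℝ] EuclideanSpace ℝ (Fin m)),
      ∀ (H : Submodule ℝ (EuclideanSpace ℝ (Fin m))) (v u : EuclideanSpace ℝ (Fin m)),
        (∀ w w', ⟪C H v u w, w'⟫ = ⟪w, C H v u w'⟫) ∧
        (∀ w, 0 ≤ ⟪C H v u w, w⟫) ∧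
        (∀ w, C H v u w ∈ H) ∧
        (∀ w ∈ H, w ≠ 0 → 0 < ⟪C H v u w, w⟫) ∧
        (∀ w, ⟪C H v u w, w⟫ ≤ ⟪projCLM H w, w⟫) ∧
        LocallyLipschitz
          (fun p : EuclideanSpace ℝ (Fin m) × EuclideanSpace ℝ (Fin m) => C H p.1 p.2) ∧
        ((Module.finrank ℝ H : ℝ) - 2 ≤
          LinearMap.trace ℝ (EuclideanSpace ℝ (Fin m)) (C H v u : _ →ₗ[ℝ] _)) ∧
        ‖C H v u v‖ ≤ δ ∧ ‖C H v u u‖ ≤ δ :=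
  smoothed_projection_exists_general m δ hδ
end
end

section
/- Let m ≥ 1 and δ > 0, let H be a linear subspace of ℝ^m with orthogonal projection P_H, and let v ∈ ℝ^m. Set v_H = P_H v, and define C(H,v) = P_H − (1 − e^{−‖v_H‖²/(2δ²)}) · (v_H/‖v_H‖) ⊗ (v_H/‖v_H‖) when v_H ≠ 0, and C(H,v) = P_H when v_H = 0. Then: (1) 0 ⪯ C(H,v) ⪯ P_H and the image of C(H,v) is contained in H; (2) Tr(C(H,v)) ≥ dim(H) − 1; (3) ‖C(H,v) v‖ ≤ δ. -/
/-!
Writing `u = v_H / ‖v_H‖` (or `u = 0` when `v_H = 0`) and `c = 1 - e^{-‖v_H‖²/(2δ²)} ∈ [0, 1]`,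
we have `C(H,v) = P_H - c • u ⊗ u` in both cases. For a vector `u ∈ H` with `‖u‖ ≤ 1`,
Cauchy–Schwarz gives `⟪u, w⟫² = ⟪u, P_H w⟫² ≤ ‖P_H w‖² = ⟪P_H w, w⟫`, whence
`0 ⪯ P_H - c • u ⊗ u ⪯ P_H`; its trace is `dim H - c ‖u‖² ≥ dim H - 1`. Finally
`C(H,v) v = e^{-t²/(2δ²)} v_H` with `t = ‖v_H‖`, and `t e^{-t²/(2δ²)} ≤ δ` because
`t/δ ≤ 1 + (t/δ)²/2 ≤ e^{(t/δ)²/2}`.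
-/

noncomputable section

open scoped RealInnerProductSpace

/-- The rank-one operator `w ⊗ w : x ↦ ⟨w, x⟩ w`. -/
def rankOne {m : ℕ} (w : EuclideanSpace ℝ (Fin m)) :
    EuclideanSpace ℝ (Fin m) →L[ℝ] EuclideanSpace ℝ (Fin m) :=
  ((innerSL ℝ) w).smulRight w

/-- The smoothed projection
`C(H,v) = P_H − (1 − e^{−‖v_H‖²/(2δ²)}) (v_H/‖v_H‖) ⊗ (v_H/‖v_H‖)`
(with `C(H,v) = P_H` when `v_H = P_H v = 0`). -/
def smoothedProj {m : ℕ} (δ : ℝ) (H : Submodule ℝ (EuclideanSpace ℝ (Fin m)))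
    (v : EuclideanSpace ℝ (Fin m)) :
    EuclideanSpace ℝ (Fin m) →L[ℝ] EuclideanSpace ℝ (Fin m) :=
  letI := Classical.propDecidable
  if projCLM H v = 0 then projCLM H
  else projCLM H -
    (1 - Real.exp (-‖projCLM H v‖ ^ 2 / (2 * δ ^ 2))) •
      rankOne (‖projCLM H v‖⁻¹ • projCLM H v)

open Module

theorem Real.exp_neg_sq_div_mul_le {δ : ℝ} (hδ : 0 < δ) (t : ℝ) :
    Real.exp (-t ^ 2 / (2 * δ ^ 2)) * t ≤ δ := by
  have key : t ≤ δ * Real.exp (t ^ 2 / (2 * δ ^ 2)) :=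
    calc t ≤ δ * (t ^ 2 / (2 * δ ^ 2) + 1) := by
          field_simp
          nlinarith [sq_nonneg (t - δ)]
      _ ≤ δ * Real.exp (t ^ 2 / (2 * δ ^ 2)) := by gcongr; exact Real.add_one_le_exp _
  rw [neg_div, Real.exp_neg, inv_mul_le_iff₀ (Real.exp_pos _), mul_comm]
  exact key

theorem norm_inv_norm_smul_le_one {E : Type*} [NormedAddCommGroup E] [NormedSpace ℝ E] (x : E) :
    ‖‖x‖⁻¹ • x‖ ≤ 1 := by
  rcases eq_or_ne x 0 with rfl | hx
  · simp
  · exact (norm_smul_inv_norm hx).le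

section

variable {m : ℕ}

theorem rankOne_apply (u w : EuclideanSpace ℝ (Fin m)) : rankOne u w = ⟪u, w⟫ • u := rfl

theorem trace_rankOne (u : EuclideanSpace ℝ (Fin m)) :
    LinearMap.trace ℝ (EuclideanSpace ℝ (Fin m)) (rankOne u : _ →ₗ[ℝ] _) = ‖u‖ ^ 2 := by
  have : (rankOne u : _ →ₗ[ℝ] _) = (innerₗ _ u).smulRight u := rfl
  rw [this, LinearMap.trace_smulRight]
  exact real_inner_self_eq_norm_sq u

variable (H : Submodule ℝ (EuclideanSpace ℝ (Fin m)))

theorem projCLM_eq_starProjection : projCLM H = H.starProjection := rfl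

theorem projCLM_apply_mem (w : EuclideanSpace ℝ (Fin m)) : projCLM H w ∈ H :=
  H.starProjection_apply_mem w

theorem inner_projCLM_apply_self (w : EuclideanSpace ℝ (Fin m)) :
    ⟪projCLM H w, w⟫ = ‖projCLM H w‖ ^ 2 := by
  rw [projCLM_eq_starProjection]
  simpa using H.re_inner_starProjection_eq_normSq w

theorem trace_projCLM :
    LinearMap.trace ℝ (EuclideanSpace ℝ (Fin m)) (projCLM H : _ →ₗ[ℝ] _) = finrank ℝ H :=
  LinearMap.IsProj.trace ⟨projCLM_apply_mem H, fun _ hx => H.starProjection_eq_self_iff.2 hx⟩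

variable {u : EuclideanSpace ℝ (Fin m)} {c : ℝ}

theorem inner_sub_smul_rankOne_apply_self (w : EuclideanSpace ℝ (Fin m)) :
    ⟪(projCLM H - c • rankOne u) w, w⟫ = ‖projCLM H w‖ ^ 2 - c * ⟪u, w⟫ ^ 2 := by
  simp only [sub_apply, smul_apply, rankOne_apply, inner_sub_left, real_inner_smul_left,
    inner_projCLM_apply_self]
  ring

theorem sq_inner_le_norm_projCLM_sq (hu : u ∈ H) (hu1 : ‖u‖ ≤ 1) (w : EuclideanSpace ℝ (Fin m)) :
    ⟪u, w⟫ ^ 2 ≤ ‖projCLM H w‖ ^ 2 := by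
  have hw : ⟪u, w⟫ = ⟪u, projCLM H w⟫ := by
    rw [projCLM_eq_starProjection, ← H.inner_starProjection_left_eq_right,
      H.starProjection_eq_self_iff.2 hu]
  rw [hw, ← sq_abs]
  gcongr
  calc |⟪u, projCLM H w⟫| ≤ ‖u‖ * ‖projCLM H w‖ := abs_real_inner_le_norm _ _
    _ ≤ ‖projCLM H w‖ := mul_le_of_le_one_left (norm_nonneg _) hu1

theorem inner_sub_smul_rankOne_apply_self_nonneg (hu : u ∈ H) (hu1 : ‖u‖ ≤ 1) (hc1 : c ≤ 1)
    (w : EuclideanSpace ℝ (Fin m)) : 0 ≤ ⟪(projCLM H - c • rankOne u) w, w⟫ := by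
  rw [inner_sub_smul_rankOne_apply_self]
  nlinarith [sq_inner_le_norm_projCLM_sq H hu hu1 w, sq_nonneg ⟪u, w⟫]

theorem inner_sub_smul_rankOne_apply_self_le (hc0 : 0 ≤ c) (w : EuclideanSpace ℝ (Fin m)) :
    ⟪(projCLM H - c • rankOne u) w, w⟫ ≤ ⟪projCLM H w, w⟫ := by
  rw [inner_sub_smul_rankOne_apply_self, inner_projCLM_apply_self]
  nlinarith [sq_nonneg ⟪u, w⟫]

theorem sub_smul_rankOne_apply_mem (hu : u ∈ H) (w : EuclideanSpace ℝ (Fin m)) :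
    (projCLM H - c • rankOne u) w ∈ H :=
  H.sub_mem (projCLM_apply_mem H w) (H.smul_mem _ (H.smul_mem _ hu))

theorem trace_sub_smul_rankOne :
    LinearMap.trace ℝ (EuclideanSpace ℝ (Fin m))
        ((projCLM H - c • rankOne u : _ →L[ℝ] _) : _ →ₗ[ℝ] _) = finrank ℝ H - c * ‖u‖ ^ 2 := by
  rw [ContinuousLinearMap.toLinearMap_sub, ContinuousLinearMap.toLinearMap_smul, map_sub,
    map_smul, trace_projCLM, trace_rankOne, smul_eq_mul]

theorem smoothedProj_eq_sub_smul_rankOne (δ : ℝ) (v : EuclideanSpace ℝ (Fin m)) :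
    smoothedProj δ H v = projCLM H -
      (1 - Real.exp (-‖projCLM H v‖ ^ 2 / (2 * δ ^ 2))) •
        rankOne (‖projCLM H v‖⁻¹ • projCLM H v) := by
  rcases eq_or_ne (projCLM H v) 0 with h | h
  · rw [smoothedProj, if_pos h, h, norm_zero, zero_pow two_ne_zero, neg_zero, zero_div,
      Real.exp_zero]
    exact (sub_eq_self.2 (smul_eq_zero_of_left (sub_self (1 : ℝ)) _)).symm
  · rw [smoothedProj, if_neg h]

theorem smoothedProj_apply_self (δ : ℝ) (v : EuclideanSpace ℝ (Fin m)) :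
    smoothedProj δ H v v = Real.exp (-‖projCLM H v‖ ^ 2 / (2 * δ ^ 2)) • projCLM H v := by
  rw [smoothedProj_eq_sub_smul_rankOne, sub_apply, smul_apply, rankOne_apply,
    real_inner_smul_left, inner_projCLM_apply_self, smul_smul, smul_smul]
  set t := ‖projCLM H v‖ with ht
  set e := Real.exp (-t ^ 2 / (2 * δ ^ 2))
  rcases eq_or_ne t 0 with h | h
  · simp [norm_eq_zero.1 (ht ▸ h)]
  · rw [show (1 - e) * (t⁻¹ * t ^ 2) * t⁻¹ = 1 - e by field_simp, sub_smul, one_smul,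
      sub_sub_cancel]

end

theorem smoothedProj_properties_general (m : ℕ) (δ : ℝ) (hδ : 0 < δ)
    (H : Submodule ℝ (EuclideanSpace ℝ (Fin m))) (v : EuclideanSpace ℝ (Fin m)) :
    (∀ w, 0 ≤ ⟪smoothedProj δ H v w, w⟫) ∧
    (∀ w, ⟪smoothedProj δ H v w, w⟫ ≤ ⟪projCLM H w, w⟫) ∧
    (∀ w, smoothedProj δ H v w ∈ H) ∧
    ((Module.finrank ℝ H : ℝ) - 1 ≤
      LinearMap.trace ℝ (EuclideanSpace ℝ (Fin m)) (smoothedProj δ H v : _ →ₗ[ℝ] _)) ∧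
    ‖smoothedProj δ H v v‖ ≤ δ := by
  set t := ‖projCLM H v‖
  set c := 1 - Real.exp (-t ^ 2 / (2 * δ ^ 2))
  set u := t⁻¹ • projCLM H v
  have hu : u ∈ H := H.smul_mem _ (projCLM_apply_mem H v)
  have hu1 : ‖u‖ ≤ 1 := norm_inv_norm_smul_le_one _
  have hc0 : 0 ≤ c := sub_nonneg.2 <| Real.exp_le_one_iff.2 <|
    div_nonpos_of_nonpos_of_nonneg (neg_nonpos.2 (sq_nonneg t)) (by positivity)
  have hc1 : c ≤ 1 := sub_le_self _ (Real.exp_pos _).le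
  have hC : smoothedProj δ H v = projCLM H - c • rankOne u :=
    smoothedProj_eq_sub_smul_rankOne H δ v
  refine ⟨fun w => ?_, fun w => ?_, fun w => ?_, ?_, ?_⟩
  · exact hC ▸ inner_sub_smul_rankOne_apply_self_nonneg H hu hu1 hc1 w
  · exact hC ▸ inner_sub_smul_rankOne_apply_self_le H hc0 w
  · exact hC ▸ sub_smul_rankOne_apply_mem H hu w
  · rw [hC, trace_sub_smul_rankOne]
    have : c * ‖u‖ ^ 2 ≤ 1 := mul_le_one₀ hc1 (sq_nonneg _) (pow_le_one₀ (norm_nonneg _) hu1)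
    linarith
  · rw [smoothedProj_apply_self, norm_smul, Real.norm_of_nonneg (Real.exp_pos _).le]
    exact Real.exp_neg_sq_div_mul_le hδ t

/-- **Properties of the smoothed one-direction projection** (the construction of
Eldan–Koehler–Zeitouni, as used in Lemma `Cprops` / Appendix A of the paper):
`0 ⪯ C(H,v) ⪯ P_H`, its image lies in `H`, its trace is at least `dim H − 1`, and
`‖C(H,v)v‖ ≤ δ`. -/
theorem smoothedProj_properties (m : ℕ) (hm : 1 ≤ m) (δ : ℝ) (hδ : 0 < δ)
    (H : Submodule ℝ (EuclideanSpace ℝ (Fin m))) (v : EuclideanSpace ℝ (Fin m)) :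
    (∀ w, 0 ≤ ⟪smoothedProj δ H v w, w⟫) ∧
    (∀ w, ⟪smoothedProj δ H v w, w⟫ ≤ ⟪projCLM H w, w⟫) ∧
    (∀ w, smoothedProj δ H v w ∈ H) ∧
    ((Module.finrank ℝ H : ℝ) - 1 ≤
      LinearMap.trace ℝ (EuclideanSpace ℝ (Fin m)) (smoothedProj δ H v : _ →ₗ[ℝ] _)) ∧
    ‖smoothedProj δ H v v‖ ≤ δ :=
  smoothedProj_properties_general m δ hδ H v
end
end

section
/- Let μ be a probability measure on 𝒞_n admitting a decomposition μ = ∫ μ_θ dη(θ), where η is a probability measure on a parameter space and each μ_θ is a probability measure on 𝒞_n. Then for every φ : 𝒞_n → ℝ, the Dirichlet forms satisfy ∫ ℰ_{μ_θ}(φ) dη(θ) ≤ ℰ_μ(φ). -/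
/-!
Each edge term of `ℰ_ν(φ)` is `(φ x - φ y)²` times `H (ν x) (ν y)`, where `H a b = a b / (a + b)`.
On the nonnegative quadrant `H a b = min_t (t² a + (1 - t)² b)`, attained at `t = b / (a + b)`,
so `H` is an infimum of linear forms and hence concave; Jensen's inequality for `H` under `η`,
applied edge by edge, gives the claim.
-/

noncomputable section

open scoped BigOperators
open MeasureTheory

/-- The Boolean string `b` with its `i`-th coordinate flipped. -/
def flipCoord {n : ℕ} (b : Fin n → Bool) (i : Fin n) : Fin n → Bool :=
  Function.update b i (!(b i))

/-- The Dirichlet form of Glauber dynamics: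
`ℰ_ν(φ) = Σ_{x,y differing in one coordinate} (φ(x)-φ(y))² ν(x)ν(y)/(ν(x)+ν(y))`
(with the convention `0/0 = 0`, which is Lean's default). -/
def dirichletForm {n : ℕ} (ν φ : (Fin n → Bool) → ℝ) : ℝ :=
  ∑ b, ∑ i, (φ b - φ (flipCoord b i)) ^ 2 *
    (ν b * ν (flipCoord b i) / (ν b + ν (flipCoord b i)))

section HarmonicTerm

variable {a b : ℝ}

lemma mul_div_add_nonneg (ha : 0 ≤ a) (hb : 0 ≤ b) : 0 ≤ a * b / (a + b) := by
  positivity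

lemma mul_div_add_le_left (ha : 0 ≤ a) (hb : 0 ≤ b) : a * b / (a + b) ≤ a := by
  rcases (add_nonneg ha hb).eq_or_lt with h | h
  · simp [← h, ha]
  · rw [div_le_iff₀ h]
    nlinarith

lemma mul_div_add_le_sq_mul_add_sq_mul (t : ℝ) (ha : 0 ≤ a) (hb : 0 ≤ b) :
    a * b / (a + b) ≤ t ^ 2 * a + (1 - t) ^ 2 * b := by
  rcases (add_nonneg ha hb).eq_or_lt with h | h
  · simp [← h]
    positivity
  · rw [div_le_iff₀ h]
    nlinarith [sq_nonneg (t * a - (1 - t) * b)]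

/-- When `a + b = 0` the choice `t = b / (a + b) = 0` still works, as then `a = b = 0`. -/
lemma sq_mul_add_sq_mul_of_eq_div (ha : 0 ≤ a) (hb : 0 ≤ b) :
    (b / (a + b)) ^ 2 * a + (1 - b / (a + b)) ^ 2 * b = a * b / (a + b) := by
  rcases (add_nonneg ha hb).eq_or_lt with h | h
  · obtain ⟨rfl, rfl⟩ : a = 0 ∧ b = 0 := ⟨by linarith, by linarith⟩
    simp
  · field_simp
    ring

end HarmonicTerm

section Integral

variable {α : Type*} [MeasurableSpace α] {μ : Measure α} {f g : α → ℝ}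

lemma MeasureTheory.Integrable.mul_div_add (hf : Integrable f μ) (hg : Integrable g μ)
    (hf0 : 0 ≤ᵐ[μ] f) (hg0 : 0 ≤ᵐ[μ] g) :
    Integrable (fun x => f x * g x / (f x + g x)) μ := by
  have hmeas : AEMeasurable (fun x => f x * g x / (f x + g x)) μ :=
    (hf.aemeasurable.mul hg.aemeasurable).div (hf.aemeasurable.add hg.aemeasurable)
  refine hf.mono' hmeas.aestronglyMeasurable ?_
  filter_upwards [hf0, hg0] with x hfx hgx
  rw [Real.norm_eq_abs, abs_of_nonneg (mul_div_add_nonneg hfx hgx)]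
  exact mul_div_add_le_left hfx hgx

theorem integral_mul_div_add_le (hf : Integrable f μ) (hg : Integrable g μ)
    (hf0 : 0 ≤ᵐ[μ] f) (hg0 : 0 ≤ᵐ[μ] g) :
    ∫ x, f x * g x / (f x + g x) ∂μ ≤
      (∫ x, f x ∂μ) * (∫ x, g x ∂μ) / ((∫ x, f x ∂μ) + (∫ x, g x ∂μ)) := by
  set t := (∫ x, g x ∂μ) / ((∫ x, f x ∂μ) + (∫ x, g x ∂μ))
  calc ∫ x, f x * g x / (f x + g x) ∂μ
      ≤ ∫ x, (t ^ 2 * f x + (1 - t) ^ 2 * g x) ∂μ := by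
        refine integral_mono_of_nonneg ?_ ((hf.const_mul _).add (hg.const_mul _)) ?_
        · filter_upwards [hf0, hg0] with x hfx hgx using mul_div_add_nonneg hfx hgx
        · filter_upwards [hf0, hg0] with x hfx hgx
            using mul_div_add_le_sq_mul_add_sq_mul t hfx hgx
    _ = t ^ 2 * ∫ x, f x ∂μ + (1 - t) ^ 2 * ∫ x, g x ∂μ := by
        rw [integral_add (hf.const_mul _) (hg.const_mul _), integral_const_mul,
          integral_const_mul]
    _ = _ := sq_mul_add_sq_mul_of_eq_div (integral_nonneg_of_ae hf0) (integral_nonneg_of_ae hg0)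

end Integral

theorem integral_dirichletForm {n : ℕ} {Θ : Type*} [MeasurableSpace Θ] {η : Measure Θ}
    {ν : Θ → (Fin n → Bool) → ℝ} (hint : ∀ b, Integrable (fun θ => ν θ b) η)
    (hnonneg : ∀ θ b, 0 ≤ ν θ b) (φ : (Fin n → Bool) → ℝ) :
    ∫ θ, dirichletForm (ν θ) φ ∂η =
      ∑ b, ∑ i, (φ b - φ (flipCoord b i)) ^ 2 *
        ∫ θ, ν θ b * ν θ (flipCoord b i) / (ν θ b + ν θ (flipCoord b i)) ∂η := by
  have hterm : ∀ (b : Fin n → Bool) (i : Fin n), Integrable (fun θ => (φ b - φ (flipCoord b i)) ^ 2 *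
      (ν θ b * ν θ (flipCoord b i) / (ν θ b + ν θ (flipCoord b i)))) η := fun b i =>
    ((hint b).mul_div_add (hint _) (.of_forall fun θ => hnonneg θ b)
      (.of_forall fun θ => hnonneg θ _)).const_mul _
  simp only [dirichletForm]
  rw [integral_finsetSum _ fun b _ => integrable_finsetSum _ fun i _ => hterm b i]
  simp only [integral_finsetSum _ fun i _ => hterm _ i, integral_const_mul]

lemma le_one_of_sum_eq_one {ι : Type*} [Fintype ι] {p : ι → ℝ} (hp : ∀ i, 0 ≤ p i)
    (hsum : ∑ i, p i = 1) (i : ι) : p i ≤ 1 :=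
  hsum ▸ Finset.single_le_sum (fun j _ => hp j) (Finset.mem_univ i)

theorem dirichletForm_concave_general (n : ℕ) {Θ : Type*} [MeasurableSpace Θ]
    (η : Measure Θ) [IsProbabilityMeasure η]
    (μ : (Fin n → Bool) → ℝ) (ν : Θ → (Fin n → Bool) → ℝ)
    (hν : ∀ θ, (∀ b, 0 ≤ ν θ b) ∧ (∑ b, ν θ b) = 1)
    (hmeas : ∀ b, Measurable fun θ => ν θ b)
    (hdecomp : ∀ b, μ b = ∫ θ, ν θ b ∂η)
    (φ : (Fin n → Bool) → ℝ) :
    ∫ θ, dirichletForm (ν θ) φ ∂η ≤ dirichletForm μ φ := by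
  have hnonneg : ∀ θ b, 0 ≤ ν θ b := fun θ => (hν θ).1
  have hint : ∀ b, Integrable (fun θ => ν θ b) η := fun b =>
    .of_bound (hmeas b).aestronglyMeasurable 1 <| .of_forall fun θ => by
      rw [Real.norm_eq_abs, abs_of_nonneg (hnonneg θ b)]
      exact le_one_of_sum_eq_one (hν θ).1 (hν θ).2 b
  rw [integral_dirichletForm hint hnonneg]
  refine Finset.sum_le_sum fun b _ => Finset.sum_le_sum fun i _ => ?_
  rw [hdecomp b, hdecomp (flipCoord b i)]
  gcongr
  exact integral_mul_div_add_le (hint b) (hint _) (.of_forall fun θ => hnonneg θ b)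
    (.of_forall fun θ => hnonneg θ _)

/-- **Concavity of the Dirichlet form under mixtures** (Lemma `dirichlet` of the paper):
if `μ = ∫ μ_θ dη(θ)` is a mixture of probability measures on the cube, then
`∫ ℰ_{μ_θ}(φ) dη(θ) ≤ ℰ_μ(φ)`. -/
theorem dirichletForm_concave (n : ℕ) {Θ : Type*} [MeasurableSpace Θ]
    (η : Measure Θ) [IsProbabilityMeasure η]
    (μ : (Fin n → Bool) → ℝ) (ν : Θ → (Fin n → Bool) → ℝ)
    (hμ : (∀ b, 0 ≤ μ b) ∧ (∑ b, μ b) = 1)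
    (hν : ∀ θ, (∀ b, 0 ≤ ν θ b) ∧ (∑ b, ν θ b) = 1)
    (hmeas : ∀ b, Measurable fun θ => ν θ b)
    (hdecomp : ∀ b, μ b = ∫ θ, ν θ b ∂η)
    (φ : (Fin n → Bool) → ℝ) :
    ∫ θ, dirichletForm (ν θ) φ ∂η ≤ dirichletForm μ φ :=
  dirichletForm_concave_general n η μ ν hν hmeas hdecomp φ
end
end
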